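/- arXiv:1602.03611 — 4 statements merged into one kernel-verified Lean document; each statement's English description precedes it below -/
import Mathlib

section
/- For real q with -1 < q < 1 and complex x with |x| < 1, the sum over n ≥ 0 of x^n / ((1-q)(1-q^2)···(1-q^n)) equals the infinite product over k ≥ 0 of 1/(1 - x q^k). -/
/-!
Let `f(x) = ∑ₙ xⁿ / (q;q)ₙ`. Since `(q;q)ₙ₊₁ = (q;q)ₙ (1 - qⁿ⁺¹)`, comparing coefficients gives
`f(q x) = (1 - x) f(x)`, hence `f(qᴺ x) = ∏_{k<N} (1 - x qᵏ) · f(x)`. As `N → ∞` the left side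
tends to `f(0) = 1` by dominated convergence (the series `∑ (1/2)ⁿ / ‖(q;q)ₙ‖` dominates near `0`
and converges by the ratio test, as `(q;q)ₙ₊₁ / (q;q)ₙ → 1`), so `f(x)` is the inverse of
`∏ₖ (1 - x qᵏ)`. The argument works in any complete normed field.
-/

open Filter Finset Topology

section

variable {𝕜 : Type*} [NormedField 𝕜] {q x y : 𝕜}

/-- `(q; q)ₙ`. -/
def qPochhammer (q : 𝕜) (n : ℕ) : 𝕜 := ∏ k ∈ range n, (1 - q ^ (k + 1))

@[simp]
lemma qPochhammer_zero (q : 𝕜) : qPochhammer q 0 = 1 := rfl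

lemma qPochhammer_succ (q : 𝕜) (n : ℕ) :
    qPochhammer q (n + 1) = qPochhammer q n * (1 - q ^ (n + 1)) :=
  prod_range_succ _ _

lemma one_sub_ne_zero_of_norm_lt_one (hy : ‖y‖ < 1) : 1 - y ≠ 0 := by
  rw [sub_ne_zero]
  rintro rfl
  simp at hy

lemma norm_pow_mul_le (hq : ‖q‖ ≤ 1) (n : ℕ) (x : 𝕜) : ‖q ^ n * x‖ ≤ ‖x‖ := by
  rw [norm_mul, norm_pow]
  exact mul_le_of_le_one_left (norm_nonneg x) (pow_le_one₀ (norm_nonneg q) hq)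

lemma mul_pow_succ_div_qPochhammer_succ (hq : ‖q‖ < 1) (x : 𝕜) (n : ℕ) :
    (q * x) ^ (n + 1) / qPochhammer q (n + 1) =
      x ^ (n + 1) / qPochhammer q (n + 1) - x * (x ^ n / qPochhammer q n) := by
  have hne : 1 - q ^ (n + 1) ≠ 0 := one_sub_ne_zero_of_norm_lt_one <| by
    rw [norm_pow]
    exact pow_lt_one₀ (norm_nonneg q) hq n.succ_ne_zero
  rw [qPochhammer_succ]
  field_simp
  ring

lemma summable_pow_div_norm_qPochhammer (hq : ‖q‖ < 1) {r : ℝ} (hr₀ : 0 ≤ r) (hr : r < 1) :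
    Summable fun n ↦ r ^ n / ‖qPochhammer q n‖ := by
  obtain ⟨s, hrs, hs⟩ := exists_between hr
  have hratio : Tendsto (fun n ↦ r / ‖1 - q ^ (n + 1)‖) atTop (𝓝 r) := by
    have h := (tendsto_pow_atTop_nhds_zero_of_norm_lt_one hq).comp (tendsto_add_atTop_nat 1)
    have h1 : Tendsto (fun n ↦ ‖1 - q ^ (n + 1)‖) atTop (𝓝 1) := by
      simpa using (tendsto_const_nhds (x := (1 : 𝕜))).sub h |>.norm
    simpa [div_eq_mul_inv] using (h1.inv₀ one_ne_zero).const_mul r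
  refine summable_of_ratio_norm_eventually_le hs ?_
  filter_upwards [hratio.eventually_le_const hrs] with n hn
  rw [Real.norm_of_nonneg (by positivity), Real.norm_of_nonneg (by positivity),
    qPochhammer_succ, norm_mul, pow_succ, mul_div_mul_comm, mul_comm]
  exact mul_le_mul_of_nonneg_right hn (by positivity)

lemma summable_norm_pow_div_qPochhammer (hq : ‖q‖ < 1) (hx : ‖x‖ < 1) :
    Summable fun n ↦ ‖x ^ n / qPochhammer q n‖ := by
  simpa only [norm_div, norm_pow] using summable_pow_div_norm_qPochhammer hq (norm_nonneg x) hx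

noncomputable def eulerSeries (q x : 𝕜) : 𝕜 := ∑' n, x ^ n / qPochhammer q n

@[simp]
lemma eulerSeries_zero (q : 𝕜) : eulerSeries q 0 = 1 := by
  rw [eulerSeries, tsum_eq_single 0 fun n hn ↦ by simp [hn]]
  simp

variable [CompleteSpace 𝕜]

lemma tendsto_eulerSeries_zero (hq : ‖q‖ < 1) : Tendsto (eulerSeries q) (𝓝 0) (𝓝 1) := by
  rw [← eulerSeries_zero q]
  refine tendsto_tsum_of_dominated_convergence (bound := fun n ↦ (1 / 2) ^ n / ‖qPochhammer q n‖)
    (summable_pow_div_norm_qPochhammer hq (by norm_num) (by norm_num))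
    (fun n ↦ ((continuous_pow n).tendsto 0).div_const _) ?_
  filter_upwards [Metric.closedBall_mem_nhds (0 : 𝕜) (by norm_num : (0 : ℝ) < 1 / 2)] with y hy n
  rw [mem_closedBall_zero_iff] at hy
  rw [norm_div, norm_pow]
  gcongr

lemma eulerSeries_mul_left (hq : ‖q‖ < 1) (hx : ‖x‖ < 1) :
    eulerSeries q (q * x) = (1 - x) * eulerSeries q x := by
  have hs := (summable_norm_pow_div_qPochhammer hq hx).of_norm
  have hqx : ‖q * x‖ < 1 := by simpa using (norm_pow_mul_le hq.le 1 x).trans_lt hx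
  have hqs := (summable_norm_pow_div_qPochhammer hq hqx).of_norm
  unfold eulerSeries
  calc ∑' n, (q * x) ^ n / qPochhammer q n
      = 1 + ∑' n, (x ^ (n + 1) / qPochhammer q (n + 1) - x * (x ^ n / qPochhammer q n)) := by
        rw [hqs.tsum_eq_zero_add, pow_zero, qPochhammer_zero, div_one]
        simp_rw [mul_pow_succ_div_qPochhammer_succ hq]
    _ = (1 + ∑' n, x ^ (n + 1) / qPochhammer q (n + 1)) - x * ∑' n, x ^ n / qPochhammer q n := by
        rw [Summable.tsum_sub ((summable_nat_add_iff 1).mpr hs) (hs.mul_left x), tsum_mul_left]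
        ring
    _ = (1 - x) * ∑' n, x ^ n / qPochhammer q n := by
        rw [hs.tsum_eq_zero_add, pow_zero, qPochhammer_zero, div_one]
        ring

lemma eulerSeries_pow_mul (hq : ‖q‖ < 1) (hx : ‖x‖ < 1) (N : ℕ) :
    eulerSeries q (q ^ N * x) = (∏ k ∈ range N, (1 - x * q ^ k)) * eulerSeries q x := by
  induction N with
  | zero => simp
  | succ N ih =>
    rw [pow_succ', mul_assoc, eulerSeries_mul_left hq ((norm_pow_mul_le hq.le N x).trans_lt hx),
      ih, prod_range_succ]
    ring

lemma multipliable_one_sub_mul_pow (hq : ‖q‖ < 1) (x : 𝕜) :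
    Multipliable fun k ↦ 1 - x * q ^ k := by
  have hsum : Summable fun k ↦ ‖-(x * q ^ k)‖ := by
    simpa [norm_mul, norm_pow] using (summable_geometric_of_lt_one (norm_nonneg q) hq).mul_left ‖x‖
  simpa [sub_eq_add_neg] using multipliable_one_add_of_summable hsum

theorem eulerSeries_eq_tprod (hq : ‖q‖ < 1) (hx : ‖x‖ < 1) :
    eulerSeries q x = ∏' k, (1 - x * q ^ k)⁻¹ := by
  have hmul := multipliable_one_sub_mul_pow hq x
  have hlim :
      Tendsto (fun N ↦ (∏ k ∈ range N, (1 - x * q ^ k)) * eulerSeries q x) atTop (𝓝 1) := by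
    simp_rw [← eulerSeries_pow_mul hq hx]
    exact (tendsto_eulerSeries_zero hq).comp
      (by simpa using (tendsto_pow_atTop_nhds_zero_of_norm_lt_one hq).mul_const x)
  have hprod : (∏' k, (1 - x * q ^ k)) * eulerSeries q x = 1 :=
    tendsto_nhds_unique (hmul.hasProd.tendsto_prod_nat.mul_const _) hlim
  rw [hmul.tprod_inv₀ (left_ne_zero_of_mul_eq_one hprod), eq_inv_of_mul_eq_one_right hprod]

end

/-- Euler's identity: for `-1 < q < 1` real and `‖x‖ < 1` complex,
`∑_{n≥0} x^n / (q;q)_n = ∏_{k≥0} (1 - x q^k)⁻¹`. -/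
theorem euler_identity (q : ℝ) (x : ℂ) (hq1 : -1 < q) (hq2 : q < 1) (hx : ‖x‖ < 1) :
    ∑' n : ℕ, x ^ n / ∏ k ∈ Finset.range n, (1 - (q : ℂ) ^ (k + 1)) =
      ∏' k : ℕ, (1 - x * (q : ℂ) ^ k)⁻¹ :=
  eulerSeries_eq_tprod (by simpa [abs_lt] using And.intro hq1 hq2) hx
end

section
/- For real q > 1 and real u with |u| < q, ∑_{n≥0} u^n q^{n^2} ∑_{r=0}^{n} 1/(|Sp(2r,q)| |Sp(2n-2r,q)|) = ∏_{i≥1}(1 + u/q^{2i})^2 / ∏_{i≥1}(1 - u^2/q^{2i}). -/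
/-!
Put `Q = q²`. Then `|Sp(2k,q)| = q^{k²} ∏_{i=1}^k (Q^i - 1)`, and the summand of index `n` is
`u^n ∑_{r+s=n} Q^{rs} / (∏_{i≤r} (Q^i - 1) ∏_{i≤s} (Q^i - 1))`. Counting `r × s` matrices over `𝔽_Q`
by rank gives `Q^{rs} = ∑_m [r m]_Q ∏_{i<m} (Q^s - Q^i)`, which rewrites the summand as
`∑_m f(r-m) f(s-m) e(m)` with `f(a) = u^a / ∏_{i≤a} (Q^i - 1)` and
`e(m) = Q^{m(m-1)/2} u^{2m} / ∏_{i≤m} (Q^i - 1)`. So the left side is `(∑ f)² ∑ e`, and Euler's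
identities `∑ f = ∏_{i≥1} (1 + u/Q^i)` and `∑ e = 1 / ∏_{i≥1} (1 - u²/Q^i)` give the right side.
Both identities come from iterating the functional equations `F(t) = (1 + t/Q) F(t/Q)` and
`(1 - t/Q) E(t) = E(t/Q)` of the two series, which tend to `1` as `t → 0`.
-/

/-- `|Sp(2m,q)| = q^{m²} ∏_{i=1}^m (q^{2i} - 1)`, extended to a real parameter `q`. -/
noncomputable def spOrder (q : ℝ) (m : ℕ) : ℝ :=
  q ^ (m ^ 2) * ∏ i ∈ Finset.range m, (q ^ (2 * (i + 1)) - 1)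

open Finset Filter Topology

lemma Nat.succ_choose_two (n : ℕ) : (n + 1).choose 2 = n.choose 2 + n := by
  rw [Nat.choose_succ_succ', Nat.choose_one_right, add_comm]

section GaussianBinomial

variable {R : Type*} [CommRing R] (Q : R)

def prodPowSubOne (k : ℕ) : R := ∏ i ∈ range k, (Q ^ (i + 1) - 1)

def prodSubPow (z : R) (k : ℕ) : R := ∏ i ∈ range k, (z - Q ^ i)

def qBinom : ℕ → ℕ → R
  | _, 0 => 1
  | 0, _ + 1 => 0
  | n + 1, k + 1 => qBinom n k + Q ^ (k + 1) * qBinom n (k + 1)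

@[simp] lemma prodPowSubOne_zero : prodPowSubOne Q 0 = 1 := prod_range_zero _

lemma prodPowSubOne_succ (k : ℕ) :
    prodPowSubOne Q (k + 1) = prodPowSubOne Q k * (Q ^ (k + 1) - 1) :=
  prod_range_succ _ _

@[simp] lemma prodSubPow_zero (z : R) : prodSubPow Q z 0 = 1 := prod_range_zero _

lemma prodSubPow_succ (z : R) (k : ℕ) :
    prodSubPow Q z (k + 1) = prodSubPow Q z k * (z - Q ^ k) :=
  prod_range_succ _ _

@[simp] lemma qBinom_zero_right (n : ℕ) : qBinom Q n 0 = 1 := by cases n <;> rfl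

lemma qBinom_succ_succ (n k : ℕ) :
    qBinom Q (n + 1) (k + 1) = qBinom Q n k + Q ^ (k + 1) * qBinom Q n (k + 1) := rfl

lemma qBinom_eq_zero_of_lt : ∀ {n k : ℕ}, n < k → qBinom Q n k = 0
  | 0, _ + 1, _ => rfl
  | n + 1, k + 1, h => by
    rw [qBinom_succ_succ, qBinom_eq_zero_of_lt (by omega), qBinom_eq_zero_of_lt (by omega),
      mul_zero, add_zero]

@[simp] lemma qBinom_self : ∀ n : ℕ, qBinom Q n n = 1
  | 0 => rfl
  | n + 1 => by rw [qBinom_succ_succ, qBinom_self n, qBinom_eq_zero_of_lt Q n.lt_succ_self]; ring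

lemma qBinom_add_mul_prodPowSubOne_mul_prodPowSubOne : ∀ k j : ℕ,
    qBinom Q (k + j) k * prodPowSubOne Q k * prodPowSubOne Q j = prodPowSubOne Q (k + j)
  | 0, j => by simp
  | k + 1, 0 => by simp
  | k + 1, j + 1 => by
    have h₁ := qBinom_add_mul_prodPowSubOne_mul_prodPowSubOne k (j + 1)
    have h₂ := qBinom_add_mul_prodPowSubOne_mul_prodPowSubOne (k + 1) j
    rw [show k + (j + 1) = k + 1 + j by ring, prodPowSubOne_succ Q j] at h₁
    rw [prodPowSubOne_succ Q k] at h₂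
    rw [show k + 1 + (j + 1) = k + 1 + j + 1 by ring, qBinom_succ_succ,
      prodPowSubOne_succ Q (k + 1 + j), prodPowSubOne_succ Q k, prodPowSubOne_succ Q j]
    linear_combination (Q ^ (k + 1) - 1) * h₁ + Q ^ (k + 1) * (Q ^ (j + 1) - 1) * h₂

lemma prodSubPow_pow_add_mul_prodPowSubOne : ∀ k j : ℕ,
    prodSubPow Q (Q ^ (k + j)) k * prodPowSubOne Q j = Q ^ k.choose 2 * prodPowSubOne Q (k + j)
  | 0, j => by simp
  | k + 1, j => by
    have h := prodSubPow_pow_add_mul_prodPowSubOne k (j + 1)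
    rw [prodPowSubOne_succ] at h
    rw [prodSubPow_succ, Nat.succ_choose_two, show k + 1 + j = k + (j + 1) by ring]
    linear_combination Q ^ k * h

lemma prodSubPow_pow_eq_zero {s k : ℕ} (h : s < k) : prodSubPow Q (Q ^ s) k = 0 :=
  prod_eq_zero (mem_range.2 h) (sub_self _)

theorem pow_eq_sum_qBinom_mul_prodSubPow (z : R) :
    ∀ n : ℕ, z ^ n = ∑ k ∈ range (n + 1), qBinom Q n k * prodSubPow Q z k
  | 0 => by simp
  | n + 1 => by
    have hshift : ∑ k ∈ range (n + 1), Q ^ k * qBinom Q n k * prodSubPow Q z k =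
        ∑ k ∈ range (n + 1), Q ^ (k + 1) * qBinom Q n (k + 1) * prodSubPow Q z (k + 1) + 1 := by
      have h := sum_range_succ' (fun k => Q ^ k * qBinom Q n k * prodSubPow Q z k) (n + 1)
      rw [sum_range_succ, qBinom_eq_zero_of_lt Q n.lt_succ_self] at h
      simpa using h
    calc z ^ (n + 1) = ∑ k ∈ range (n + 1), qBinom Q n k * prodSubPow Q z k * z := by
          rw [pow_succ, pow_eq_sum_qBinom_mul_prodSubPow z n, sum_mul]
      _ = ∑ k ∈ range (n + 1), qBinom Q n k * prodSubPow Q z (k + 1) +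
            ∑ k ∈ range (n + 1), Q ^ k * qBinom Q n k * prodSubPow Q z k := by
          rw [← sum_add_distrib]
          exact sum_congr rfl fun k _ => by rw [prodSubPow_succ]; ring
      _ = ∑ k ∈ range (n + 1 + 1), qBinom Q (n + 1) k * prodSubPow Q z k := by
          rw [hshift, sum_range_succ' _ (n + 1)]
          simp only [qBinom_succ_succ, add_mul, sum_add_distrib, qBinom_zero_right,
            prodSubPow_zero, mul_assoc]
          ring

end GaussianBinomial

theorem pow_mul_div_prodPowSubOne_mul_eq_sum {K : Type*} [Field K] {Q : K}
    (hQ : ∀ k, prodPowSubOne Q k ≠ 0) (r s : ℕ) :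
    Q ^ (r * s) / (prodPowSubOne Q r * prodPowSubOne Q s) =
      ∑ m ∈ range (min r s + 1),
        Q ^ m.choose 2 /
          (prodPowSubOne Q m * prodPowSubOne Q (r - m) * prodPowSubOne Q (s - m)) := by
  have hsum :
      Q ^ (r * s) = ∑ m ∈ range (min r s + 1), qBinom Q r m * prodSubPow Q (Q ^ s) m := by
    rw [mul_comm, pow_mul, pow_eq_sum_qBinom_mul_prodSubPow]
    refine (sum_subset (range_subset_range.2 (by omega)) fun m hm hm' => ?_).symm
    rw [prodSubPow_pow_eq_zero Q (by simp only [mem_range] at hm hm'; omega), mul_zero]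
  rw [hsum, sum_div]
  refine sum_congr rfl fun m hm => ?_
  have hm' : m ≤ min r s := Nat.lt_succ_iff.1 (mem_range.1 hm)
  obtain ⟨a, rfl⟩ := Nat.exists_eq_add_of_le (hm'.trans (min_le_left _ _))
  obtain ⟨b, rfl⟩ := Nat.exists_eq_add_of_le (hm'.trans (min_le_right _ _))
  simp only [Nat.add_sub_cancel_left]
  rw [div_eq_div_iff (mul_ne_zero (hQ _) (hQ _)) (mul_ne_zero (mul_ne_zero (hQ _) (hQ _)) (hQ _))]
  linear_combination (prodSubPow Q (Q ^ (m + b)) m * prodPowSubOne Q b) *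
      qBinom_add_mul_prodPowSubOne_mul_prodPowSubOne Q m a +
    prodPowSubOne Q (m + a) * prodSubPow_pow_add_mul_prodPowSubOne Q m b

lemma HasSum.sum_antidiagonal {α A : Type*} [AddCommMonoid α] [TopologicalSpace α]
    [ContinuousAdd α] [RegularSpace α] [AddCommMonoid A] [HasAntidiagonal A] {f : A × A → α}
    {a : α} (h : HasSum f a) :
    HasSum (fun n => ∑ p ∈ antidiagonal n, f p) a := by
  refine (HasAntidiagonal.sigmaAntidiagonalEquivProd.hasSum_iff.2 h).sigma fun n => ?_
  rw [← sum_coe_sort]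
  exact hasSum_fintype _

theorem hasSum_sum_range_min_mul {R : Type*} [NormedCommRing R] [CompleteSpace R]
    {f g e : ℕ → R} (hf : Summable fun n => ‖f n‖) (hg : Summable fun n => ‖g n‖)
    (he : Summable fun n => ‖e n‖) :
    HasSum (fun p : ℕ × ℕ => ∑ m ∈ range (min p.1 p.2 + 1), f (p.1 - m) * g (p.2 - m) * e m)
      ((∑' n, f n) * (∑' n, g n) * ∑' n, e n) := by
  have hfg : HasSum (fun p : ℕ × ℕ => f p.1 * g p.2) ((∑' n, f n) * ∑' n, g n) :=
    hf.of_norm.hasSum.mul hg.of_norm.hasSum (summable_mul_of_summable_norm hf hg)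
  have hfge : HasSum (fun z : (ℕ × ℕ) × ℕ => f z.1.1 * g z.1.2 * e z.2)
      ((∑' n, f n) * (∑' n, g n) * ∑' n, e n) :=
    hfg.mul he.of_norm.hasSum
      (summable_mul_of_summable_norm (f := fun p : ℕ × ℕ => f p.1 * g p.2) (hf.mul_norm hg) he)
  set T : (ℕ × ℕ) × ℕ → R := fun z =>
    if z.2 ≤ z.1.1 ∧ z.2 ≤ z.1.2 then f (z.1.1 - z.2) * g (z.1.2 - z.2) * e z.2 else 0
  have hι : Function.Injective fun z : (ℕ × ℕ) × ℕ => ((z.1.1 + z.2, z.1.2 + z.2), z.2) := by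
    rintro ⟨⟨a, b⟩, m⟩ ⟨⟨a', b'⟩, m'⟩ h
    simp only [Prod.mk.injEq] at h
    ext <;> simp <;> omega
  have hT : HasSum T ((∑' n, f n) * (∑' n, g n) * ∑' n, e n) := by
    refine (hι.hasSum_iff fun z hz => if_neg fun h =>
      hz ⟨((z.1.1 - z.2, z.1.2 - z.2), z.2), ?_⟩).1 (hfge.congr_fun fun z => ?_)
    · ext <;> simp <;> omega
    · simp
  refine hT.prod_fiberwise fun p => ?_
  have hsupp : ∀ m ∉ range (min p.1 p.2 + 1), T (p, m) = 0 := fun m hm => if_neg fun h => hm <|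
    mem_range.2 (Nat.lt_succ_of_le (le_min h.1 h.2))
  have h : HasSum _ _ := hasSum_sum_of_ne_finset_zero hsupp
  rwa [sum_congr rfl fun m hm => if_pos <| by
    have := Nat.le_of_lt_succ (mem_range.1 hm)
    exact ⟨this.trans (min_le_left _ _), this.trans (min_le_right _ _)⟩] at h

section EulerProducts

variable {Q : ℝ}

lemma prodPowSubOne_pos (hQ : 1 < Q) (k : ℕ) : 0 < prodPowSubOne Q k :=
  prod_pos fun i _ => sub_pos.2 (one_lt_pow₀ hQ i.succ_ne_zero)

lemma summable_abs_of_succ_eq_mul {f ρ : ℕ → ℝ} {r : ℝ} (hr : r < 1)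
    (hf : ∀ n, f (n + 1) = f n * ρ n) (hρ : ∀ᶠ n in atTop, |ρ n| ≤ r) :
    Summable fun n => |f n| :=
  (summable_of_ratio_norm_eventually_le hr (hρ.mono fun n hn => by
    simp only [Real.norm_eq_abs, hf, abs_mul]
    rw [mul_comm r]
    exact mul_le_mul_of_nonneg_left hn (abs_nonneg _))).abs

lemma summable_abs_inv_prodPowSubOne_mul_pow (hQ : 1 < Q) (u : ℝ) :
    Summable fun a => |(prodPowSubOne Q a)⁻¹ * u ^ a| := by
  refine summable_abs_of_succ_eq_mul (ρ := fun a => u / (Q ^ (a + 1) - 1)) one_half_lt_one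
    (fun a => by rw [prodPowSubOne_succ, mul_inv, pow_succ]; ring) ?_
  filter_upwards [((tendsto_add_atTop_iff_nat 1).2 (tendsto_pow_atTop_atTop_of_one_lt hQ)
    ).eventually_ge_atTop (2 * |u| + 1)] with a ha
  have hpos : 0 < Q ^ (a + 1) - 1 := sub_pos.2 (one_lt_pow₀ hQ a.succ_ne_zero)
  rw [abs_div, abs_of_pos hpos, div_le_iff₀ hpos]
  linarith

lemma summable_abs_pow_choose_div_prodPowSubOne_mul_pow (hQ : 1 < Q) {w : ℝ} (hw : |w| < Q) :
    Summable fun m => |Q ^ m.choose 2 / prodPowSubOne Q m * w ^ m| := by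
  have hQ0 : 0 < Q := zero_lt_one.trans hQ
  obtain ⟨r, hwr, hr⟩ := exists_between ((div_lt_one hQ0).2 hw)
  have hδ : 0 < r * Q - |w| := sub_pos.2 ((div_lt_iff₀ hQ0).1 hwr)
  refine summable_abs_of_succ_eq_mul (ρ := fun m => Q ^ m * w / (Q ^ (m + 1) - 1)) hr
    (fun m => by
      rw [prodPowSubOne_succ, Nat.succ_choose_two, pow_add, pow_succ w, ← div_div]
      ring) ?_
  filter_upwards [(tendsto_pow_atTop_atTop_of_one_lt hQ).eventually_ge_atTop (r / (r * Q - |w|))]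
    with m hm
  have hpos : 0 < Q ^ (m + 1) - 1 := sub_pos.2 (one_lt_pow₀ hQ m.succ_ne_zero)
  rw [abs_div, abs_mul, abs_of_pos (pow_pos hQ0 m), abs_of_pos hpos, div_le_iff₀ hpos, pow_succ]
  have := (div_le_iff₀ hδ).1 hm
  linarith

lemma tendsto_tsum_mul_pow {c t : ℕ → ℝ} {ρ : ℝ} (hc : Summable fun a => |c a * ρ ^ a|)
    (htρ : ∀ N, |t N| ≤ |ρ|) (ht : Tendsto t atTop (𝓝 0)) :
    Tendsto (fun N => ∑' a, c a * t N ^ a) atTop (𝓝 (c 0)) := by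
  have hlim : ∑' a, c a * (0 : ℝ) ^ a = c 0 := by
    rw [tsum_eq_single 0 fun a ha => by rw [zero_pow ha, mul_zero]]
    simp
  rw [← hlim]
  refine tendsto_tsum_of_dominated_convergence hc
    (fun a => ((continuous_const.mul (continuous_pow a)).tendsto 0).comp ht) ?_
  refine Eventually.of_forall fun N a => ?_
  rw [Real.norm_eq_abs, abs_mul, abs_mul, abs_pow, abs_pow]
  exact mul_le_mul_of_nonneg_left (pow_le_pow_left₀ (abs_nonneg _) (htρ N) a) (abs_nonneg _)

lemma tsum_eq_tsum_add_mul_tsum {α β γ : ℕ → ℝ} (c : ℝ) (hα : Summable α) (hβ : Summable β)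
    (hγ : Summable γ) (h0 : α 0 = β 0) (hsucc : ∀ n, α (n + 1) = β (n + 1) + c * γ n) :
    ∑' n, α n = ∑' n, β n + c * ∑' n, γ n := by
  rw [hα.tsum_eq_zero_add, hβ.tsum_eq_zero_add, h0, tsum_congr hsucc,
    ((summable_nat_add_iff 1).2 hβ).tsum_add (hγ.mul_left c), tsum_mul_left, add_assoc]

lemma summable_div_pow_succ (hQ : 1 < Q) (u : ℝ) : Summable fun i : ℕ => u / Q ^ (i + 1) := by
  have hQ' : Q⁻¹ < 1 := inv_lt_one_of_one_lt₀ hQ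
  refine (((summable_geometric_of_lt_one (inv_nonneg.2 (zero_le_one.trans hQ.le)) hQ'
    ).comp_injective (add_left_injective 1)).mul_left u).congr fun i => ?_
  simp [div_eq_mul_inv, inv_pow]

lemma multipliable_one_add_div_pow (hQ : 1 < Q) (u : ℝ) :
    Multipliable fun i : ℕ => 1 + u / Q ^ (i + 1) :=
  Real.multipliable_one_add_of_summable (summable_div_pow_succ hQ u)

lemma tendsto_div_pow (hQ : 1 < Q) (u : ℝ) : Tendsto (fun N : ℕ => u / Q ^ N) atTop (𝓝 0) :=
  tendsto_const_nhds.div_atTop (tendsto_pow_atTop_atTop_of_one_lt hQ)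

lemma abs_div_pow_le (hQ : 1 ≤ Q) (u : ℝ) (N : ℕ) : |u / Q ^ N| ≤ |u| := by
  rw [abs_div, abs_of_pos (pow_pos (zero_lt_one.trans_le hQ) N)]
  exact div_le_self (abs_nonneg u) (one_le_pow₀ hQ)

theorem tprod_one_add_div_pow_eq_tsum (hQ : 1 < Q) (u : ℝ) :
    ∏' i : ℕ, (1 + u / Q ^ (i + 1)) = ∑' a, (prodPowSubOne Q a)⁻¹ * u ^ a := by
  set G : ℝ → ℝ := fun t => ∑' a, (prodPowSubOne Q a)⁻¹ * t ^ a
  have hsum t := (summable_abs_inv_prodPowSubOne_mul_pow hQ t).of_abs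
  have hG : ∀ t, G t = (1 + t / Q) * G (t / Q) := fun t => by
    rw [add_mul, one_mul]
    refine tsum_eq_tsum_add_mul_tsum _ (hsum t) (hsum _) (hsum _) (by simp) fun n => ?_
    have := (prodPowSubOne_pos hQ n).ne'
    have := (sub_pos.2 (one_lt_pow₀ hQ n.succ_ne_zero)).ne'
    have := (zero_lt_one.trans hQ).ne'
    rw [prodPowSubOne_succ, div_pow, div_pow]
    field_simp
    ring
  have hprod : ∀ N, (∏ i ∈ range N, (1 + u / Q ^ (i + 1))) * G (u / Q ^ N) = G u := by
    intro N
    induction N with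
    | zero => simp
    | succ N ih => rw [← ih, hG (u / Q ^ N), div_div, ← pow_succ, prod_range_succ, mul_assoc]
  have hlim : Tendsto (fun N => G (u / Q ^ N)) atTop (𝓝 1) := by
    simpa using tendsto_tsum_mul_pow (summable_abs_inv_prodPowSubOne_mul_pow hQ u)
      (abs_div_pow_le hQ.le u) (tendsto_div_pow hQ u)
  have h := (multipliable_one_add_div_pow hQ u).hasProd.tendsto_prod_nat.mul hlim
  rw [mul_one] at h
  exact tendsto_nhds_unique h (by simp_rw [hprod]; exact tendsto_const_nhds)

theorem tprod_one_sub_div_pow_mul_tsum (hQ : 1 < Q) {w : ℝ} (hw : |w| < Q) :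
    (∏' i : ℕ, (1 - w / Q ^ (i + 1))) * ∑' m, Q ^ m.choose 2 / prodPowSubOne Q m * w ^ m = 1 := by
  set E : ℝ → ℝ := fun t => ∑' m, Q ^ m.choose 2 / prodPowSubOne Q m * t ^ m
  have hsum {t} (ht : |t| < Q) := (summable_abs_pow_choose_div_prodPowSubOne_mul_pow hQ ht).of_abs
  have hE : ∀ t, |t| < Q → (1 - t / Q) * E t = E (t / Q) := fun t ht => by
    have ht' : |t / Q| < Q := by simpa using (abs_div_pow_le hQ.le t 1).trans_lt ht
    rw [sub_mul, one_mul, sub_eq_iff_eq_add]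
    refine tsum_eq_tsum_add_mul_tsum _ (hsum ht) (hsum ht') (hsum ht) (by simp) fun n => ?_
    have := (prodPowSubOne_pos hQ n).ne'
    have := (sub_pos.2 (one_lt_pow₀ hQ n.succ_ne_zero)).ne'
    have := (zero_lt_one.trans hQ).ne'
    rw [prodPowSubOne_succ, Nat.succ_choose_two, div_pow]
    field_simp
    ring
  have hprod : ∀ N, (∏ i ∈ range N, (1 - w / Q ^ (i + 1))) * E w = E (w / Q ^ N) := by
    intro N
    induction N with
    | zero => simp
    | succ N ih =>
      rw [prod_range_succ, mul_right_comm, ih, mul_comm, pow_succ, ← div_div,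
        hE _ ((abs_div_pow_le hQ.le w N).trans_lt hw)]
  have hlim : Tendsto (fun N => E (w / Q ^ N)) atTop (𝓝 1) := by
    simpa using tendsto_tsum_mul_pow (summable_abs_pow_choose_div_prodPowSubOne_mul_pow hQ hw)
      (abs_div_pow_le hQ.le w) (tendsto_div_pow hQ w)
  have hmult : Multipliable fun i : ℕ => 1 - w / Q ^ (i + 1) := by
    simpa [sub_eq_add_neg, neg_div] using multipliable_one_add_div_pow hQ (-w)
  refine tendsto_nhds_unique (hmult.hasProd.tendsto_prod_nat.mul_const (E w)) ?_
  simp_rw [hprod]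
  exact hlim

end EulerProducts

lemma spOrder_eq_pow_mul_prodPowSubOne (q : ℝ) (k : ℕ) :
    spOrder q k = q ^ (k ^ 2) * prodPowSubOne (q ^ 2) k := by
  simp only [spOrder, prodPowSubOne, pow_mul]

lemma pow_mul_sum_one_div_spOrder_eq {q : ℝ} (hq : 1 < q) (u : ℝ) (n : ℕ) :
    u ^ n * q ^ (n ^ 2) * ∑ r ∈ range (n + 1), 1 / (spOrder q r * spOrder q (n - r)) =
      ∑ p ∈ antidiagonal n, ∑ m ∈ range (min p.1 p.2 + 1),
        (prodPowSubOne (q ^ 2) (p.1 - m))⁻¹ * u ^ (p.1 - m) *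
          ((prodPowSubOne (q ^ 2) (p.2 - m))⁻¹ * u ^ (p.2 - m)) *
          ((q ^ 2) ^ m.choose 2 / prodPowSubOne (q ^ 2) m * (u ^ 2) ^ m) := by
  have hP k := (prodPowSubOne_pos (one_lt_pow₀ hq two_ne_zero) k).ne'
  have hq0 : q ≠ 0 := (zero_lt_one.trans hq).ne'
  rw [← Nat.sum_antidiagonal_eq_sum_range_succ fun r s => 1 / (spOrder q r * spOrder q s),
    mul_sum]
  refine sum_congr rfl fun ⟨r, s⟩ hp => ?_
  rw [HasAntidiagonal.mem_antidiagonal] at hp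
  subst hp
  calc u ^ (r + s) * q ^ ((r + s) ^ 2) * (1 / (spOrder q r * spOrder q s))
      = u ^ (r + s) *
          ((q ^ 2) ^ (r * s) / (prodPowSubOne (q ^ 2) r * prodPowSubOne (q ^ 2) s)) := by
        rw [spOrder_eq_pow_mul_prodPowSubOne, spOrder_eq_pow_mul_prodPowSubOne]
        field_simp
        ring
    _ = ∑ m ∈ range (min r s + 1), u ^ (r + s) * ((q ^ 2) ^ m.choose 2 /
          (prodPowSubOne (q ^ 2) m * prodPowSubOne (q ^ 2) (r - m) *
            prodPowSubOne (q ^ 2) (s - m))) := by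
        rw [pow_mul_div_prodPowSubOne_mul_eq_sum hP, mul_sum]
    _ = _ := sum_congr rfl fun m hm => by
        have hm' := Nat.le_of_lt_succ (mem_range.1 hm)
        have : u ^ (r + s) = u ^ (r - m) * u ^ (s - m) * (u ^ 2) ^ m := by
          rw [← pow_mul, ← pow_add, ← pow_add]
          congr 1
          omega
        rw [this]
        ring

/-- Sum = product identity for odd characteristic symplectic groups:
`∑_{n≥0} u^n q^{n²} ∑_{r=0}^n 1/(|Sp(2r,q)| |Sp(2n-2r,q)|)
  = ∏_{i≥1}(1+u/q^{2i})² / ∏_{i≥1}(1-u²/q^{2i})`. -/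
theorem sum_eq_product_Sp (q u : ℝ) (hq : 1 < q) (hu : |u| < q) :
    ∑' n : ℕ, u ^ n * q ^ (n ^ 2) *
      ∑ r ∈ Finset.range (n + 1), 1 / (spOrder q r * spOrder q (n - r)) =
      (∏' i : ℕ, (1 + u / q ^ (2 * (i + 1))) ^ 2) / ∏' i : ℕ, (1 - u ^ 2 / q ^ (2 * (i + 1))) := by
  have hQ : 1 < q ^ 2 := one_lt_pow₀ hq two_ne_zero
  have hu2 : |u ^ 2| < q ^ 2 := by
    rw [abs_pow]
    exact pow_lt_pow_left₀ hu (abs_nonneg u) two_ne_zero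
  have hf := summable_abs_inv_prodPowSubOne_mul_pow hQ u
  have hsum := (hasSum_sum_range_min_mul (f := fun a => (prodPowSubOne (q ^ 2) a)⁻¹ * u ^ a)
    (g := fun a => (prodPowSubOne (q ^ 2) a)⁻¹ * u ^ a)
    (e := fun m => (q ^ 2) ^ m.choose 2 / prodPowSubOne (q ^ 2) m * (u ^ 2) ^ m) hf hf
    (summable_abs_pow_choose_div_prodPowSubOne_mul_pow hQ hu2)).sum_antidiagonal
  have hden := tprod_one_sub_div_pow_mul_tsum hQ hu2
  simp_rw [pow_mul q 2]
  rw [tsum_congr (pow_mul_sum_one_div_spOrder_eq hq u), hsum.tsum_eq,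
    (multipliable_one_add_div_pow hQ u).tprod_pow, tprod_one_add_div_pow_eq_tsum hQ u,
    eq_div_iff (left_ne_zero_of_mul_eq_one hden)]
  linear_combination (∑' a, (prodPowSubOne (q ^ 2) a)⁻¹ * u ^ a) ^ 2 * hden
end

section
/- For fixed even prime power q, the limit as n → ∞ of i_Sp(2n,q)/q^{n^2+n} equals ∏_{i≥1}(1 + q^{-2i}), where i_Sp(2n,q) is defined by the formula i_Sp(2n,q) = ∑_{r even, 0≤r≤n} |Sp(2n,q)|/A_r + ∑_{r even, 2≤r≤n} |Sp(2n,q)|/B_r + ∑_{r odd, 1≤r≤n} |Sp(2n,q)|/C_r with A_r = q^{r(r+1)/2 + r(2n-2r)} |Sp(r,q)| |Sp(2n-2r,q)|, B_r = q^{r(r+1)/2 + r(2n-2r)+r-1} |Sp(r-2,q)| |Sp(2n-2r,q)|, C_r = q^{r(r+1)/2 + r(2n-2r)} |Sp(r-1,q)| |Sp(2n-2r,q)|. -/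
/-!
Put `y = q⁻¹` and `(y²; y²)_m = ∏_{i=1}^m (1 - y^{2i})`, so that `|Sp(2m, q)| = q^{2m² + m} (y²; y²)_m`.
After division by `q^{n² + n}` every class term is a power of `y` times a ratio of such products,
and these products all lie between `∏_{i ≥ 1} (1 - y^{2i}) > 0` and `1`.
Each of the at most `n + 1` terms `|Sp(2n, q)| / A_r` carries a factor `y^n`, so their sum vanishes
in the limit. The terms for `B_r` and `C_r`, indexed by `t = n - r`, are
`y^{t(t+1)} / (y²; y²)_t · (y²; y²)_n / (y²; y²)_{⌊(n-t-1)/2⌋}`; the last ratio tends to `1`, and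
dominated convergence gives the limit `∑_t y^{t(t+1)} / (y²; y²)_t`. This is `∏_{i ≥ 1} (1 + y^{2i})`
by Euler's identity, which follows from `S_N = ∑_t y^{2Nt} y^{t(t+1)} / (y²; y²)_t` satisfying
`S_N = (1 + y^{2N+2}) S_{N+1}` and `S_N → 1`.
-/

open Finset Filter Topology

/-- `(y²; y²)_m`, so that `spOrder q m = q ^ (2 * m ^ 2 + m) * qPoch q⁻¹ m`. -/
noncomputable def qPoch (y : ℝ) (m : ℕ) : ℝ := ∏ i ∈ range m, (1 - y ^ (2 * (i + 1)))

noncomputable def qPochLimit (y : ℝ) : ℝ := ∏' i : ℕ, (1 - y ^ (2 * (i + 1)))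

section QPochhammer

variable {y : ℝ}

lemma summable_pow_two_mul_succ (hy₀ : 0 ≤ y) (hy₁ : y < 1) :
    Summable fun i : ℕ => y ^ (2 * (i + 1)) :=
  ((summable_geometric_of_lt_one (sq_nonneg y) (by nlinarith)).mul_left (y ^ 2)).congr
    fun i => by ring

lemma qPoch_zero : qPoch y 0 = 1 := prod_range_zero _

lemma qPoch_succ (m : ℕ) : qPoch y (m + 1) = qPoch y m * (1 - y ^ (2 * (m + 1))) :=
  prod_range_succ _ _

lemma qPoch_pos (hy₀ : 0 ≤ y) (hy₁ : y < 1) (m : ℕ) : 0 < qPoch y m :=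
  prod_pos fun i _ => sub_pos.2 (pow_lt_one₀ hy₀ hy₁ (by omega))

lemma qPoch_antitone (hy₀ : 0 ≤ y) (hy₁ : y < 1) : Antitone (qPoch y) :=
  antitone_nat_of_succ_le fun m => by
    rw [qPoch_succ]
    exact mul_le_of_le_one_right (qPoch_pos hy₀ hy₁ m).le
      (sub_le_self _ (pow_nonneg hy₀ _))

lemma qPoch_le_one (hy₀ : 0 ≤ y) (hy₁ : y < 1) (m : ℕ) : qPoch y m ≤ 1 :=
  qPoch_zero (y := y) ▸ qPoch_antitone hy₀ hy₁ (Nat.zero_le m)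

lemma multipliable_one_sub_pow_two_mul_succ (hy₀ : 0 ≤ y) (hy₁ : y < 1) :
    Multipliable fun i : ℕ => 1 - y ^ (2 * (i + 1)) := by
  simpa [sub_eq_add_neg] using
    Real.multipliable_one_add_of_summable (summable_pow_two_mul_succ hy₀ hy₁).neg

lemma tendsto_qPoch (hy₀ : 0 ≤ y) (hy₁ : y < 1) :
    Tendsto (qPoch y) atTop (𝓝 (qPochLimit y)) :=
  (multipliable_one_sub_pow_two_mul_succ hy₀ hy₁).hasProd.tendsto_prod_nat

lemma qPochLimit_pos (hy₀ : 0 ≤ y) (hy₁ : y < 1) : 0 < qPochLimit y := by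
  refine lt_of_le_of_ne (ge_of_tendsto' (tendsto_qPoch hy₀ hy₁) fun m =>
    (qPoch_pos hy₀ hy₁ m).le) (Ne.symm ?_)
  simpa [qPochLimit, sub_eq_add_neg] using tprod_one_add_ne_zero_of_summable
    (f := fun i : ℕ => -y ^ (2 * (i + 1)))
    (fun i => by linarith [pow_lt_one₀ hy₀ hy₁ (n := 2 * (i + 1)) (by omega)])
    (by simpa [abs_of_nonneg hy₀] using summable_pow_two_mul_succ hy₀ hy₁)

lemma qPochLimit_le_qPoch (hy₀ : 0 ≤ y) (hy₁ : y < 1) (m : ℕ) : qPochLimit y ≤ qPoch y m :=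
  (qPoch_antitone hy₀ hy₁).le_of_tendsto (tendsto_qPoch hy₀ hy₁) m

lemma inv_qPoch_le (hy₀ : 0 ≤ y) (hy₁ : y < 1) (m : ℕ) : (qPoch y m)⁻¹ ≤ (qPochLimit y)⁻¹ :=
  inv_anti₀ (qPochLimit_pos hy₀ hy₁) (qPochLimit_le_qPoch hy₀ hy₁ m)

lemma qPoch_div_le (hy₀ : 0 ≤ y) (hy₁ : y < 1) (n m : ℕ) :
    qPoch y n / qPoch y m ≤ (qPochLimit y)⁻¹ := by
  rw [div_eq_mul_inv, ← one_mul (qPochLimit y)⁻¹]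
  exact mul_le_mul (qPoch_le_one hy₀ hy₁ n) (inv_qPoch_le hy₀ hy₁ m)
    (inv_nonneg.2 (qPoch_pos hy₀ hy₁ m).le) zero_le_one

end QPochhammer

noncomputable def eulerTerm (y : ℝ) (t : ℕ) : ℝ := y ^ (t * (t + 1)) / qPoch y t

noncomputable def shiftedEulerSum (y : ℝ) (N : ℕ) : ℝ := ∑' t, y ^ (2 * N * t) * eulerTerm y t

section Euler

variable {y : ℝ}

lemma eulerTerm_zero : eulerTerm y 0 = 1 := by simp [eulerTerm, qPoch_zero]

lemma eulerTerm_nonneg (hy₀ : 0 ≤ y) (hy₁ : y < 1) (t : ℕ) : 0 ≤ eulerTerm y t :=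
  div_nonneg (pow_nonneg hy₀ _) (qPoch_pos hy₀ hy₁ t).le

lemma eulerTerm_le (hy₀ : 0 ≤ y) (hy₁ : y < 1) (t : ℕ) :
    eulerTerm y t ≤ (qPochLimit y)⁻¹ * y ^ t := by
  rw [eulerTerm, div_eq_mul_inv, mul_comm]
  exact mul_le_mul (inv_qPoch_le hy₀ hy₁ t)
    (pow_le_pow_of_le_one hy₀ hy₁.le (Nat.le_mul_of_pos_right t t.succ_pos))
    (pow_nonneg hy₀ _) (inv_nonneg.2 (qPochLimit_pos hy₀ hy₁).le)

lemma summable_eulerTerm (hy₀ : 0 ≤ y) (hy₁ : y < 1) : Summable (eulerTerm y) :=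
  .of_nonneg_of_le (eulerTerm_nonneg hy₀ hy₁) (eulerTerm_le hy₀ hy₁)
    ((summable_geometric_of_lt_one hy₀ hy₁).mul_left _)

lemma pow_mul_eulerTerm_le (hy₀ : 0 ≤ y) (hy₁ : y < 1) (N t : ℕ) :
    y ^ (2 * N * t) * eulerTerm y t ≤ eulerTerm y t :=
  mul_le_of_le_one_left (eulerTerm_nonneg hy₀ hy₁ t) (pow_le_one₀ hy₀ hy₁.le)

lemma summable_pow_mul_eulerTerm (hy₀ : 0 ≤ y) (hy₁ : y < 1) (N : ℕ) :
    Summable fun t => y ^ (2 * N * t) * eulerTerm y t :=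
  .of_nonneg_of_le (fun t => mul_nonneg (pow_nonneg hy₀ _) (eulerTerm_nonneg hy₀ hy₁ t))
    (pow_mul_eulerTerm_le hy₀ hy₁ N) (summable_eulerTerm hy₀ hy₁)

lemma pow_mul_eulerTerm_succ (hy₀ : 0 ≤ y) (hy₁ : y < 1) (N t : ℕ) :
    y ^ (2 * N * (t + 1)) * eulerTerm y (t + 1) =
      y ^ (2 * (N + 1) * (t + 1)) * eulerTerm y (t + 1) +
        y ^ (2 * (N + 1)) * (y ^ (2 * (N + 1) * t) * eulerTerm y t) := by
  have hP := (qPoch_pos hy₀ hy₁ t).ne'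
  have hf : 1 - y ^ (2 * (t + 1)) ≠ 0 := (sub_pos.2 (pow_lt_one₀ hy₀ hy₁ (by omega))).ne'
  simp only [eulerTerm, qPoch_succ]
  field_simp
  ring

lemma shiftedEulerSum_eq_mul_succ (hy₀ : 0 ≤ y) (hy₁ : y < 1) (N : ℕ) :
    shiftedEulerSum y N = (1 + y ^ (2 * (N + 1))) * shiftedEulerSum y (N + 1) := by
  have hs := summable_pow_mul_eulerTerm hy₀ hy₁
  have hs' := fun N => (summable_nat_add_iff 1).2 (hs N)
  simp only [shiftedEulerSum]
  rw [hs N |>.tsum_eq_zero_add, (hs (N + 1)).tsum_eq_zero_add,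
    tsum_congr (pow_mul_eulerTerm_succ hy₀ hy₁ N), (hs' (N + 1)).tsum_add
      ((hs (N + 1)).mul_left _), tsum_mul_left, (hs (N + 1)).tsum_eq_zero_add]
  simp only [mul_zero, pow_zero, eulerTerm_zero]
  ring

lemma shiftedEulerSum_zero : shiftedEulerSum y 0 = ∑' t, eulerTerm y t := by
  simp [shiftedEulerSum]

lemma tendsto_shiftedEulerSum (hy₀ : 0 ≤ y) (hy₁ : y < 1) :
    Tendsto (shiftedEulerSum y) atTop (𝓝 1) := by
  have hlim : ∀ t, Tendsto (fun N => y ^ (2 * N * t) * eulerTerm y t) atTop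
      (𝓝 (if t = 0 then 1 else 0)) := by
    intro t
    rcases t.eq_zero_or_pos with rfl | ht
    · simp [eulerTerm_zero]
    · simp only [ht.ne', if_false, mul_right_comm 2 _ t, pow_mul _ (2 * t)]
      simpa using (tendsto_pow_atTop_nhds_zero_of_lt_one (pow_nonneg hy₀ (2 * t))
          (pow_lt_one₀ hy₀ hy₁ (by omega))).mul_const (eulerTerm y t)
  have := tendsto_tsum_of_dominated_convergence (summable_eulerTerm hy₀ hy₁) hlim
    (.of_forall fun N t => by
      rw [Real.norm_of_nonneg (mul_nonneg (pow_nonneg hy₀ _) (eulerTerm_nonneg hy₀ hy₁ t))]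
      exact pow_mul_eulerTerm_le hy₀ hy₁ N t)
  rwa [tsum_ite_eq] at this

lemma tsum_eulerTerm (hy₀ : 0 ≤ y) (hy₁ : y < 1) :
    ∑' t, eulerTerm y t = ∏' i : ℕ, (1 + y ^ (2 * (i + 1))) := by
  have hprod : ∀ N, shiftedEulerSum y 0 =
      (∏ i ∈ range N, (1 + y ^ (2 * (i + 1)))) * shiftedEulerSum y N := by
    intro N
    induction N with
    | zero => simp
    | succ N ih => rw [ih, shiftedEulerSum_eq_mul_succ hy₀ hy₁ N, prod_range_succ, mul_assoc]
  have hmul := (Real.multipliable_one_add_of_summable (summable_pow_two_mul_succ hy₀ hy₁))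
  have := hmul.hasProd.tendsto_prod_nat.mul (tendsto_shiftedEulerSum hy₀ hy₁)
  rw [mul_one, ← funext hprod] at this
  rw [← shiftedEulerSum_zero, tendsto_nhds_unique tendsto_const_nhds this]

end Euler

section Limits

variable {y : ℝ}

lemma pow_mul_qPoch_div_mul_nonneg (hy₀ : 0 ≤ y) (hy₁ : y < 1) (k n a b : ℕ) :
    0 ≤ y ^ k * (qPoch y n / (qPoch y a * qPoch y b)) :=
  mul_nonneg (pow_nonneg hy₀ k) (div_nonneg (qPoch_pos hy₀ hy₁ n).le
    (mul_nonneg (qPoch_pos hy₀ hy₁ a).le (qPoch_pos hy₀ hy₁ b).le))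

lemma pow_mul_qPoch_div_mul_le (hy₀ : 0 ≤ y) (hy₁ : y < 1) {k n a b : ℕ} (hk : n ≤ k) :
    y ^ k * (qPoch y n / (qPoch y a * qPoch y b)) ≤ (qPochLimit y)⁻¹ ^ 2 * y ^ n := by
  rw [mul_comm, div_mul_eq_div_div, div_eq_mul_inv, sq]
  exact mul_le_mul (mul_le_mul (qPoch_div_le hy₀ hy₁ n a) (inv_qPoch_le hy₀ hy₁ b)
    (inv_nonneg.2 (qPoch_pos hy₀ hy₁ b).le) (inv_nonneg.2 (qPochLimit_pos hy₀ hy₁).le))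
    (pow_le_pow_of_le_one hy₀ hy₁.le hk) (pow_nonneg hy₀ k) (mul_self_nonneg _)

lemma tendsto_sum_eulerTerm_mul_qPoch_div (hy₀ : 0 ≤ y) (hy₁ : y < 1) {m : ℕ → ℕ → ℕ}
    (hm : ∀ t, Tendsto (fun n => m n t) atTop atTop) :
    Tendsto (fun n => ∑ t ∈ range n, eulerTerm y t * (qPoch y n / qPoch y (m n t))) atTop
      (𝓝 (∑' t, eulerTerm y t)) := by
  set F : ℕ → ℕ → ℝ := fun n t => if t < n then eulerTerm y t * (qPoch y n / qPoch y (m n t))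
    else 0
  have hsum : ∀ n, ∑ t ∈ range n, eulerTerm y t * (qPoch y n / qPoch y (m n t)) = ∑' t, F n t :=
    fun n => by
      rw [tsum_eq_sum (s := range n) fun t ht => if_neg (by simpa using ht)]
      exact sum_congr rfl fun t ht => (if_pos (mem_range.1 ht)).symm
  have hc := (qPochLimit_pos hy₀ hy₁).ne'
  have hF : ∀ t, Tendsto (F · t) atTop (𝓝 (eulerTerm y t)) := fun t => by
    have hratio := (tendsto_qPoch hy₀ hy₁).div ((tendsto_qPoch hy₀ hy₁).comp (hm t)) hc
    rw [div_self hc] at hratio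
    rw [← mul_one (eulerTerm y t)]
    refine (hratio.const_mul (eulerTerm y t)).congr' ?_
    filter_upwards [eventually_gt_atTop t] with n hn
    simp [F, hn]
  have hbound : ∀ n t, ‖F n t‖ ≤ eulerTerm y t * (qPochLimit y)⁻¹ := fun n t => by
    have he := eulerTerm_nonneg hy₀ hy₁ t
    have hP := (qPoch_pos hy₀ hy₁ n).le
    have hPm := (qPoch_pos hy₀ hy₁ (m n t)).le
    simp only [F]
    split_ifs
    · rw [Real.norm_of_nonneg (by positivity)]
      exact mul_le_mul_of_nonneg_left (qPoch_div_le hy₀ hy₁ _ _) he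
    · simpa using mul_nonneg he (inv_nonneg.2 (qPochLimit_pos hy₀ hy₁).le)
  simpa only [hsum] using tendsto_tsum_of_dominated_convergence
    ((summable_eulerTerm hy₀ hy₁).mul_right _) hF (.of_forall hbound)

lemma tendsto_sum_filter_of_le_mul_pow (hy₀ : 0 ≤ y) (hy₁ : y < 1) {C : ℝ} {p : ℕ → Prop}
    [DecidablePred p] {f : ℕ → ℕ → ℝ} (hf₀ : ∀ n r, 0 ≤ f n r)
    (hf : ∀ n r, r ≤ n → f n r ≤ C * y ^ n) :
    Tendsto (fun n => ∑ r ∈ (range (n + 1)).filter p, f n r) atTop (𝓝 0) := by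
  have hlim := ((tendsto_self_mul_const_pow_of_lt_one hy₀ hy₁).add
    (tendsto_pow_atTop_nhds_zero_of_lt_one hy₀ hy₁)).const_mul C
  rw [add_zero, mul_zero] at hlim
  refine squeeze_zero (fun n => sum_nonneg fun r _ => hf₀ n r) (fun n => ?_) hlim
  calc ∑ r ∈ (range (n + 1)).filter p, f n r ≤ ∑ r ∈ range (n + 1), f n r :=
        sum_le_sum_of_subset_of_nonneg (filter_subset _ _) fun r _ _ => hf₀ n r
    _ ≤ ∑ _r ∈ range (n + 1), C * y ^ n :=
        sum_le_sum fun r hr => hf n r (Nat.lt_succ_iff.1 (mem_range.1 hr))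
    _ = C * (n * y ^ n + y ^ n) := by
          simp only [sum_const, card_range, nsmul_eq_mul, Nat.cast_add, Nat.cast_one]
          ring

end Limits

section Normalization

variable {q : ℝ}

lemma spOrder_eq_mul_qPoch (hq : q ≠ 0) (m : ℕ) :
    spOrder q m = q ^ (2 * m ^ 2 + m) * qPoch q⁻¹ m := by
  have hfactor : ∀ i : ℕ, q ^ (2 * (i + 1)) - 1 = q ^ (2 * (i + 1)) * (1 - q⁻¹ ^ (2 * (i + 1))) :=
    fun i => by rw [mul_sub, mul_one, ← mul_pow, mul_inv_cancel₀ hq, one_pow]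
  have hexp : ∑ i ∈ range m, 2 * (i + 1) = m ^ 2 + m := by
    induction m with
    | zero => rfl
    | succ m ih => rw [sum_range_succ, ih]; ring
  rw [spOrder, prod_congr rfl fun i _ => hfactor i, prod_mul_distrib, prod_pow_eq_pow_sum, hexp,
    ← mul_assoc, ← pow_add, qPoch]
  ring_nf

lemma spOrder_div_eq (hq : q ≠ 0) {e k n m₁ m₂ : ℕ}
    (h : n ^ 2 + k = e + (2 * m₁ ^ 2 + m₁) + (2 * m₂ ^ 2 + m₂)) :
    spOrder q n / (q ^ e * spOrder q m₁ * spOrder q m₂) / q ^ (n ^ 2 + n) =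
      q⁻¹ ^ k * (qPoch q⁻¹ n / (qPoch q⁻¹ m₁ * qPoch q⁻¹ m₂)) := by
  have hpow : q ^ e * q ^ (2 * m₁ ^ 2 + m₁) * q ^ (2 * m₂ ^ 2 + m₂) = q ^ (n ^ 2) * q ^ k := by
    rw [← pow_add, ← pow_add, ← pow_add, h]
  simp only [spOrder_eq_mul_qPoch hq]
  calc _ = q ^ (n ^ 2) * q ^ (n ^ 2 + n) /
        ((q ^ e * q ^ (2 * m₁ ^ 2 + m₁) * q ^ (2 * m₂ ^ 2 + m₂)) * q ^ (n ^ 2 + n)) *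
          (qPoch q⁻¹ n / (qPoch q⁻¹ m₁ * qPoch q⁻¹ m₂)) := by ring
    _ = _ := by
      rw [hpow, inv_pow]
      congr 1
      field_simp

lemma spOrder_div_A_eq (hq : q ≠ 0) {n r : ℕ} (hr : Even r) (hrn : r ≤ n) :
    spOrder q n / (q ^ (r * (r + 1) / 2 + r * (2 * n - 2 * r)) * spOrder q (r / 2) *
        spOrder q (n - r)) / q ^ (n ^ 2 + n) =
      q⁻¹ ^ ((n - r) * (n - r + 1) + r) *
        (qPoch q⁻¹ n / (qPoch q⁻¹ (r / 2) * qPoch q⁻¹ (n - r))) := by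
  obtain ⟨s, rfl⟩ := hr
  obtain ⟨t, rfl⟩ := Nat.exists_eq_add_of_le hrn
  have hhalf : (s + s) * (s + s + 1) / 2 = s * (2 * s + 1) :=
    Nat.div_eq_of_eq_mul_left two_pos (by ring)
  rw [hhalf, Nat.add_sub_cancel_left, show 2 * (s + s + t) - 2 * (s + s) = 2 * t by omega,
    show (s + s) / 2 = s by omega]
  exact spOrder_div_eq hq (by ring)

lemma spOrder_div_eq_eulerTerm (hq : q ≠ 0) {e n m t : ℕ}
    (h : n ^ 2 + t * (t + 1) = e + (2 * m ^ 2 + m) + (2 * t ^ 2 + t)) :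
    spOrder q n / (q ^ e * spOrder q m * spOrder q t) / q ^ (n ^ 2 + n) =
      eulerTerm q⁻¹ t * (qPoch q⁻¹ n / qPoch q⁻¹ m) := by
  rw [spOrder_div_eq hq h, eulerTerm]
  ring

lemma spOrder_div_B_eq (hq : q ≠ 0) {n r : ℕ} (hr : Even r) (h1r : 1 ≤ r) (hrn : r ≤ n) :
    spOrder q n / (q ^ (r * (r + 1) / 2 + r * (2 * n - 2 * r) + r - 1) *
        spOrder q (r / 2 - 1) * spOrder q (n - r)) / q ^ (n ^ 2 + n) =
      eulerTerm q⁻¹ (n - r) * (qPoch q⁻¹ n / qPoch q⁻¹ ((r - 1) / 2)) := by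
  obtain ⟨s, rfl⟩ := hr
  obtain ⟨u, rfl⟩ : ∃ u, s = u + 1 := ⟨s - 1, by omega⟩
  obtain ⟨t, rfl⟩ := Nat.exists_eq_add_of_le hrn
  have hhalf : (u + 1 + (u + 1)) * (u + 1 + (u + 1) + 1) / 2 = (u + 1) * (2 * u + 3) :=
    Nat.div_eq_of_eq_mul_left two_pos (by ring)
  rw [hhalf, Nat.add_sub_cancel_left, show 2 * (u + 1 + (u + 1) + t) - 2 * (u + 1 + (u + 1)) =
    2 * t by omega, show (u + 1 + (u + 1)) / 2 - 1 = u by omega,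
    show (u + 1 + (u + 1) - 1) / 2 = u by omega]
  refine spOrder_div_eq_eulerTerm hq ?_
  rw [Nat.add_sub_assoc (by omega), show u + 1 + (u + 1) - 1 = 2 * u + 1 by omega]
  ring

lemma spOrder_div_C_eq (hq : q ≠ 0) {n r : ℕ} (hr : Odd r) (hrn : r ≤ n) :
    spOrder q n / (q ^ (r * (r + 1) / 2 + r * (2 * n - 2 * r)) *
        spOrder q ((r - 1) / 2) * spOrder q (n - r)) / q ^ (n ^ 2 + n) =
      eulerTerm q⁻¹ (n - r) * (qPoch q⁻¹ n / qPoch q⁻¹ ((r - 1) / 2)) := by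
  obtain ⟨u, rfl⟩ := hr
  obtain ⟨t, rfl⟩ := Nat.exists_eq_add_of_le hrn
  have hhalf : (2 * u + 1) * (2 * u + 1 + 1) / 2 = (2 * u + 1) * (u + 1) :=
    Nat.div_eq_of_eq_mul_left two_pos (by ring)
  rw [hhalf, Nat.add_sub_cancel_left, show 2 * (2 * u + 1 + t) - 2 * (2 * u + 1) = 2 * t by omega,
    show (2 * u + 1 - 1) / 2 = u by omega]
  exact spOrder_div_eq_eulerTerm hq (by ring)

end Normalization

/-- `i_Sp(2n, q)`. -/
noncomputable def spInvolutionCount (q : ℝ) (n : ℕ) : ℝ :=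
  (∑ r ∈ (range (n + 1)).filter (fun r => Even r),
      spOrder q n / (q ^ (r * (r + 1) / 2 + r * (2 * n - 2 * r)) *
        spOrder q (r / 2) * spOrder q (n - r)))
    + (∑ r ∈ (range (n + 1)).filter (fun r => Even r ∧ 1 ≤ r),
      spOrder q n / (q ^ (r * (r + 1) / 2 + r * (2 * n - 2 * r) + r - 1) *
        spOrder q (r / 2 - 1) * spOrder q (n - r)))
    + (∑ r ∈ (range (n + 1)).filter (fun r => Odd r),
      spOrder q n / (q ^ (r * (r + 1) / 2 + r * (2 * n - 2 * r)) *
        spOrder q ((r - 1) / 2) * spOrder q (n - r)))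

lemma sum_filter_one_le_eq_sum_range_sub {M : Type*} [AddCommMonoid M] (f : ℕ → M) (n : ℕ) :
    ∑ r ∈ (range (n + 1)).filter (1 ≤ ·), f r = ∑ t ∈ range n, f (n - t) := by
  rw [← Nat.Ico_zero_eq_range, ← Nat.Ico_zero_eq_range, sum_Ico_reflect f 0 (Nat.le_succ n),
    Nat.add_sub_cancel_left, Nat.sub_zero]
  congr 1
  ext r
  simp only [mem_filter, mem_Ico]
  omega

lemma spInvolutionCount_div_eq {q : ℝ} (hq : q ≠ 0) (n : ℕ) :
    spInvolutionCount q n / q ^ (n ^ 2 + n) =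
      ∑ r ∈ (range (n + 1)).filter (fun r => Even r), q⁻¹ ^ ((n - r) * (n - r + 1) + r) *
          (qPoch q⁻¹ n / (qPoch q⁻¹ (r / 2) * qPoch q⁻¹ (n - r))) +
        ∑ t ∈ range n, eulerTerm q⁻¹ t * (qPoch q⁻¹ n / qPoch q⁻¹ ((n - t - 1) / 2)) := by
  set f : ℕ → ℝ := fun r => eulerTerm q⁻¹ (n - r) * (qPoch q⁻¹ n / qPoch q⁻¹ ((r - 1) / 2))
  have hB : (range (n + 1)).filter (fun r => Even r ∧ 1 ≤ r) =
      ((range (n + 1)).filter (1 ≤ ·)).filter (fun r => Even r) := by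
    rw [filter_filter]
    simp only [and_comm]
  have hC : (range (n + 1)).filter (fun r => Odd r) =
      ((range (n + 1)).filter (1 ≤ ·)).filter (fun r => ¬Even r) := by
    rw [filter_filter]
    refine filter_congr fun r _ => ?_
    rw [Nat.not_even_iff_odd]
    exact ⟨fun h => ⟨h.pos, h⟩, And.right⟩
  rw [spInvolutionCount, add_div, add_div, add_assoc, sum_div, sum_div, sum_div, hB, hC]
  congr 1
  · refine sum_congr rfl fun r hr => ?_
    rw [mem_filter, mem_range] at hr
    exact spOrder_div_A_eq hq hr.2 (by omega)
  · trans ∑ r ∈ ((range (n + 1)).filter (1 ≤ ·)).filter (fun r => Even r), f r +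
        ∑ r ∈ ((range (n + 1)).filter (1 ≤ ·)).filter (fun r => ¬Even r), f r
    · congr 1 <;> refine sum_congr rfl fun r hr => ?_ <;> simp only [mem_filter, mem_range] at hr
      · exact spOrder_div_B_eq hq hr.2 hr.1.2 (by omega)
      · exact spOrder_div_C_eq hq (Nat.not_even_iff_odd.1 hr.2) (by omega)
    rw [sum_filter_add_sum_filter_not, sum_filter_one_le_eq_sum_range_sub]
    refine sum_congr rfl fun t ht => ?_
    rw [mem_range] at ht
    simp only [f, Nat.sub_sub_self ht.le]

lemma tendsto_spInvolutionCount_div {q : ℝ} (hq : 1 < q) :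
    Tendsto (fun n => spInvolutionCount q n / q ^ (n ^ 2 + n)) atTop
      (𝓝 (∏' i : ℕ, (1 + q⁻¹ ^ (2 * (i + 1))))) := by
  have hy₀ : 0 ≤ q⁻¹ := inv_nonneg.2 (by linarith)
  have hy₁ : q⁻¹ < 1 := inv_lt_one_of_one_lt₀ hq
  have hA := tendsto_sum_filter_of_le_mul_pow hy₀ hy₁ (p := fun r => Even r)
    (f := fun n r => q⁻¹ ^ ((n - r) * (n - r + 1) + r) *
      (qPoch q⁻¹ n / (qPoch q⁻¹ (r / 2) * qPoch q⁻¹ (n - r))))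
    (fun n r => pow_mul_qPoch_div_mul_nonneg hy₀ hy₁ _ _ _ _)
    fun n r hrn => pow_mul_qPoch_div_mul_le hy₀ hy₁ (by nlinarith [Nat.sub_add_cancel hrn])
  have hBC := tendsto_sum_eulerTerm_mul_qPoch_div hy₀ hy₁ (m := fun n t => (n - t - 1) / 2)
    fun t => tendsto_atTop_atTop.2 fun b => ⟨2 * b + t + 1, fun n hn => by omega⟩
  rw [← tsum_eulerTerm hy₀ hy₁, ← zero_add (∑' t, eulerTerm q⁻¹ t)]
  simpa only [spInvolutionCount_div_eq (by linarith : q ≠ 0)] using hA.add hBC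

/-- For fixed even prime power `q`, `i_Sp(2n,q)/q^{n²+n} → ∏_{i≥1}(1+q^{-2i})` as `n → ∞`,
where `i_Sp(2n,q)` is given by the stated sum over classes (here `Sp(r,q)` for even `r` is
`spOrder q (r/2)`). -/
theorem involutions_Sp_even_char_limit (q : ℕ) (hq : ∃ k : ℕ, 0 < k ∧ q = 2 ^ k) :
    Filter.Tendsto
      (fun n : ℕ =>
        ((∑ r ∈ (Finset.range (n + 1)).filter (fun r => Even r),
            spOrder q n / ((q : ℝ) ^ (r * (r + 1) / 2 + r * (2 * n - 2 * r)) *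
              spOrder q (r / 2) * spOrder q (n - r)))
          + (∑ r ∈ (Finset.range (n + 1)).filter (fun r => Even r ∧ 1 ≤ r),
            spOrder q n / ((q : ℝ) ^ (r * (r + 1) / 2 + r * (2 * n - 2 * r) + r - 1) *
              spOrder q (r / 2 - 1) * spOrder q (n - r)))
          + (∑ r ∈ (Finset.range (n + 1)).filter (fun r => Odd r),
            spOrder q n / ((q : ℝ) ^ (r * (r + 1) / 2 + r * (2 * n - 2 * r)) *
              spOrder q ((r - 1) / 2) * spOrder q (n - r)))) / (q : ℝ) ^ (n ^ 2 + n))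
      Filter.atTop
      (nhds (∏' i : ℕ, (1 + (q : ℝ) ^ (-(2 : ℤ) * ((i : ℤ) + 1))))) := by
  obtain ⟨k, hk, rfl⟩ := hq
  have hq : (1 : ℝ) < (2 ^ k : ℕ) := by
    push_cast
    exact one_lt_pow₀ one_lt_two hk.ne'
  have hpow : ∀ i : ℕ, ((2 ^ k : ℕ) : ℝ) ^ (-(2 : ℤ) * ((i : ℤ) + 1)) =
      ((2 ^ k : ℕ) : ℝ)⁻¹ ^ (2 * (i + 1)) := fun i => by
    rw [inv_pow, ← zpow_natCast, ← zpow_neg]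
    push_cast
    ring_nf
  simp only [hpow]
  exact tendsto_spInvolutionCount_div hq
end

section
/- Let q be a power of 2, V a 2n-dimensional vector space over F_q with nondegenerate quadratic form of minus type (n ≥ 1), and G = O^-(2n,q) its isometry group. Then G contains no involution g with g^2 = 1 such that (g-1)V is a totally singular subspace of dimension n on which the associated alternating form restricts to zero and the corresponding symmetric matrix is alternating of full rank n; equivalently, the class C(n) of Sp(2n,q) (involutions of skew type and rank n, n even) does not meet O^-(2n,q). -/
/-!
If `g` is an isometry of `Q` with `B(v, g v) = 0` for all `v`, then
`Q (g v - v) = Q (g v) + Q v - B(g v, v) = 2 Q v`, which vanishes in characteristic `2`.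
So `(g - 1)V` is totally singular, of dimension `n`; but a quadratic space of minus type in
dimension `2n` has Witt index `n - 1`.
-/

namespace QuadraticMap

variable {R M N : Type*} [CommRing R] [AddCommGroup M] [Module R M] [AddCommGroup N] [Module R N]

theorem map_sub_eq_sub_polar (Q : QuadraticMap R M N) (x y : M) :
    Q (x - y) = Q x + Q y - polar Q x y := by
  rw [sub_eq_add_neg, QuadraticMap.map_add Q, Q.map_neg, polar_neg_right, ← sub_eq_add_neg]

theorem map_sub_self_eq_zero_of_polar_eq_zero [CharP R 2] (Q : QuadraticMap R M N) {x y : M}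
    (hQ : Q x = Q y) (hxy : polar Q x y = 0) : Q (x - y) = 0 := by
  rw [map_sub_eq_sub_polar, hQ, hxy, sub_zero, ← two_smul R, CharTwo.two_eq_zero, zero_smul]

theorem map_eq_zero_of_mem_range_sub_id [CharP R 2] (Q : QuadraticMap R M N) {f : M →ₗ[R] M}
    (hf : ∀ v, Q (f v) = Q v) (horth : ∀ v, polar Q v (f v) = 0) :
    ∀ w ∈ LinearMap.range (f - LinearMap.id), Q w = 0 := by
  rintro _ ⟨v, rfl⟩
  exact Q.map_sub_self_eq_zero_of_polar_eq_zero (hf v) (polar_comm Q _ _ ▸ horth v)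

end QuadraticMap

theorem no_skew_rank_n_involution_in_O_minus_general
    (F : Type*) [Field F] [CharP F 2]
    (V : Type*) [AddCommGroup V] [Module F V]
    (n : ℕ)
    (Q : QuadraticForm F V)
    (hminus : ∀ W : Submodule F V, (∀ w ∈ W, Q w = 0) → Module.finrank F W < n) :
    ¬ ∃ g : V ≃ₗ[F] V, (∀ v, Q (g v) = Q v) ∧ g ^ 2 = 1 ∧
      Module.finrank F (LinearMap.range ((g : V →ₗ[F] V) - LinearMap.id)) = n ∧
      (∀ x ∈ LinearMap.range ((g : V →ₗ[F] V) - LinearMap.id),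
        ∀ y ∈ LinearMap.range ((g : V →ₗ[F] V) - LinearMap.id),
          QuadraticMap.polarBilin Q x y = 0) ∧
      (∀ v, QuadraticMap.polarBilin Q v (g v) = 0) := by
  rintro ⟨g, hQ, -, hrank, -, horth⟩
  have hsing := Q.map_eq_zero_of_mem_range_sub_id (f := g) hQ horth
  exact (hminus _ hsing).ne hrank

/-- Over a finite field of characteristic `2`, an orthogonal group of minus type in dimension
`2n` (`n` even, `n ≥ 1`) contains no involution `g` with `W = (g-1)V` of dimension `n`, with the
associated alternating form vanishing identically on `W`, and with the corresponding symmetric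
matrix alternating (i.e. `B(v, gv) = 0` for all `v`); in other words, the symplectic class
`C(n)` does not meet `O^-(2n,q)`. -/
theorem no_skew_rank_n_involution_in_O_minus (q : ℕ) (hq : ∃ k : ℕ, 0 < k ∧ q = 2 ^ k)
    (F : Type*) [Field F] [Fintype F] (hF : Fintype.card F = q) [CharP F 2]
    (V : Type*) [AddCommGroup V] [Module F V] [FiniteDimensional F V]
    (n : ℕ) (hn : 1 ≤ n) (hneven : Even n) (hdim : Module.finrank F V = 2 * n)
    (Q : QuadraticForm F V) (hnd : (QuadraticMap.polarBilin Q).Nondegenerate)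
    (hminus : ∀ W : Submodule F V, (∀ w ∈ W, Q w = 0) → Module.finrank F W < n) :
    ¬ ∃ g : V ≃ₗ[F] V, (∀ v, Q (g v) = Q v) ∧ g ^ 2 = 1 ∧
      Module.finrank F (LinearMap.range ((g : V →ₗ[F] V) - LinearMap.id)) = n ∧
      (∀ x ∈ LinearMap.range ((g : V →ₗ[F] V) - LinearMap.id),
        ∀ y ∈ LinearMap.range ((g : V →ₗ[F] V) - LinearMap.id),
          QuadraticMap.polarBilin Q x y = 0) ∧
      (∀ v, QuadraticMap.polarBilin Q v (g v) = 0) :=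
  no_skew_rank_n_involution_in_O_minus_general F V n Q hminus
end
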